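/- Let d ≥ 2 and p_c(d) < p < q with associated scale-1 good boxes for the coupled percolations. Let A ⊆ ℤ^d and let ℐ be a finite *-connected set of sites, all (p,q)-good at scale 1, such that dis(A, ⋃_{i ∈ ℐ} B_{N₁}(i)) > (14β + 2d) N₁. Let j, k ∈ ℐ, let x ∈ B′_{N₁}(j) belong to the p-crossing cluster of B_{N₁}(j) and let y ∈ B′_{N₁}(k) belong to the p-crossing cluster of B_{N₁}(k). Then there exists a p-open path joining x and y, of length at most 12 β N₁ |ℐ|, that visits no point of A. -/

import Mathlib

open scoped Classical

namespace FPP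

abbrev Vert (d : ℕ) := Fin d → ℤ

abbrev EdgeIdx (d : ℕ) := (Fin d → ℤ) × Fin d

def unitVec (d : ℕ) (i : Fin d) : Vert d := fun j => if j = i then 1 else 0

/-- ℓ¹-distance on ℤ^d. -/
def dist1 {d : ℕ} (x y : Vert d) : ℕ := ∑ i, (x i - y i).natAbs

/-- ℓ¹-norm on ℤ^d. -/
def norm1 {d : ℕ} (x : Vert d) : ℕ := ∑ i, (x i).natAbs

/-- ℓ∞-distance on ℤ^d. -/
def distInfty {d : ℕ} (x y : Vert d) : ℕ := Finset.univ.sup fun i => (x i - y i).natAbs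

/-- Nearest-neighbour adjacency on ℤ^d. -/
def adj {d : ℕ} (x y : Vert d) : Prop := dist1 x y = 1

/-- *-adjacency on ℤ^d. -/
def adjStar {d : ℕ} (x y : Vert d) : Prop := distInfty x y = 1

/-- A percolation configuration: each edge `(x, x + eᵢ)` is open (`true`) or closed. -/
abbrev Config (d : ℕ) := EdgeIdx d → Bool

/-- The unordered pair `{x,y}` is an open edge of the configuration `ω`. -/
def edgeOpenPair {d : ℕ} (ω : Config d) (x y : Vert d) : Prop :=
  ∃ i : Fin d, (y = x + unitVec d i ∧ ω (x, i) = true) ∨ (x = y + unitVec d i ∧ ω (y, i) = true)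

/-- An open path: a nonempty list of vertices whose consecutive steps are open edges. -/
def IsOpenPath {d : ℕ} (ω : Config d) (γ : List (Vert d)) : Prop :=
  γ ≠ [] ∧ γ.Chain' (edgeOpenPair ω)

def PathFromTo {d : ℕ} (γ : List (Vert d)) (x y : Vert d) : Prop :=
  γ.head? = some x ∧ γ.getLast? = some y

def Connected {d : ℕ} (ω : Config d) (x y : Vert d) : Prop :=
  ∃ γ, IsOpenPath ω γ ∧ PathFromTo γ x y

/-- The open cluster of a vertex. -/
def cluster {d : ℕ} (ω : Config d) (x : Vert d) : Set (Vert d) := {y | Connected ω x y}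

/-- The chemical distance (graph distance in the open subgraph), `⊤` if not connected. -/
noncomputable def chemDist {d : ℕ} (ω : Config d) (x y : Vert d) : ℕ∞ :=
  ⨅ (γ : List (Vert d)) (_ : IsOpenPath ω γ ∧ PathFromTo γ x y), ((γ.length - 1 : ℕ) : ℕ∞)

/-- Graph distance inside the infinite cluster: `⊤` unless both points lie in an
infinite cluster. -/
noncomputable def distInfCl {d : ℕ} (ω : Config d) (x y : Vert d) : ℕ∞ :=
  if (cluster ω x).Infinite ∧ (cluster ω y).Infinite then chemDist ω x y else ⊤

/-- The union of the infinite open clusters (a.s. the unique infinite cluster). -/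
def infClusterSet {d : ℕ} (ω : Config d) : Set (Vert d) := {y | (cluster ω y).Infinite}

/-- `tilde C x` : a point of `C` minimizing the ℓ¹-distance to `x`
(with a deterministic rule to break ties). -/
noncomputable def tilde {d : ℕ} (C : Set (Vert d)) (x : Vert d) : Vert d :=
  if h : ∃ y, y ∈ C ∧ ∀ z ∈ C, dist1 x y ≤ dist1 x z then h.choose else x

/-- An i.i.d. Bernoulli bond percolation model on ℤ^d with parameter `p`. -/
structure PercModel (d : ℕ) (p : ℝ) where
  Ω : Type
  [mΩ : MeasurableSpace Ω]
  P : MeasureTheory.Measure Ω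
  isProb : MeasureTheory.IsProbabilityMeasure P
  X : EdgeIdx d → Ω → Bool
  meas : ∀ e, Measurable (X e)
  indep : ProbabilityTheory.iIndepFun X P
  bern : ∀ e, P {ω | X e ω = true} = ENNReal.ofReal p

def PercModel.cfg {d : ℕ} {p : ℝ} (M : PercModel d p) (ω : M.Ω) : Config d :=
  fun e => M.X e ω

/-- The critical parameter of i.i.d. Bernoulli bond percolation on ℤ^d. -/
noncomputable def pc (d : ℕ) : ℝ :=
  sInf {p : ℝ | p ∈ Set.Icc (0:ℝ) 1 ∧
    ∀ M : PercModel d p, 0 < M.P {ω | (cluster (M.cfg ω) 0).Infinite}}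

/-- `μ` is the time constant for the law `G_p = p δ₁ + (1-p) δ_∞`: for every model of
Bernoulli percolation at parameter `p`, the regularized chemical distance
`D^{𝒞_p}(0̃, ñx)/n` converges almost surely to `μ x`. -/
def TimeConstant (d : ℕ) (p : ℝ) (μ : Vert d → ℝ) : Prop :=
  ∀ M : PercModel d p, ∀ x : Vert d,
    ∀ᵐ ω ∂M.P, Filter.Tendsto
      (fun n : ℕ =>
        ((distInfCl (M.cfg ω) (tilde (infClusterSet (M.cfg ω)) 0)
            (tilde (infClusterSet (M.cfg ω)) ((n : ℤ) • x))).toNat : ℝ) / n)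
      Filter.atTop (nhds (μ x))


/-- The box `[−N/2, N/2)^d ∩ ℤ^d`. -/
def boxZ (d : ℕ) (N : ℕ) : Set (Vert d) :=
  {x | ∀ i, -((N : ℝ) / 2) ≤ (x i : ℝ) ∧ (x i : ℝ) < (N : ℝ) / 2}

/-- The translated box `B_N(i) = iN + B_N`. -/
def boxAt (d : ℕ) (N : ℕ) (i : Vert d) : Set (Vert d) := {v | v - (N : ℤ) • i ∈ boxZ d N}

/-- The enlarged box `B′_N(i) = iN + B_{3N}`. -/
def boxAt' (d : ℕ) (N : ℕ) (i : Vert d) : Set (Vert d) :=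
  {v | v - (N : ℤ) • i ∈ boxZ d (3 * N)}

/-- An open path staying inside the set `S`. -/
def IsOpenPathIn {d : ℕ} (ω : Config d) (S : Set (Vert d)) (γ : List (Vert d)) : Prop :=
  IsOpenPath ω γ ∧ ∀ v ∈ γ, v ∈ S

def ConnectedIn {d : ℕ} (ω : Config d) (S : Set (Vert d)) (x y : Vert d) : Prop :=
  ∃ γ, IsOpenPathIn ω S γ ∧ PathFromTo γ x y

/-- The open cluster of `x` in the configuration restricted to `S`. -/
def clusterIn {d : ℕ} (ω : Config d) (S : Set (Vert d)) (x : Vert d) : Set (Vert d) :=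
  {y | ConnectedIn ω S x y}

/-- `C` is a cluster of the configuration restricted to `S`. -/
def IsClusterIn {d : ℕ} (ω : Config d) (S C : Set (Vert d)) : Prop :=
  ∃ x ∈ S, C = clusterIn ω S x

/-- The ℓ∞-diameter of `C` is larger than `N`. -/
def DiamGT {d : ℕ} (C : Set (Vert d)) (N : ℕ) : Prop :=
  ∃ x ∈ C, ∃ y ∈ C, N < distInfty x y

/-- The cluster `C` is crossing for the box `B`: for each pair of opposite faces of `B`
there is an open path in `C ∩ B` connecting them. -/
def Crossing {d : ℕ} (ω : Config d) (C B : Set (Vert d)) : Prop :=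
  ∀ i : Fin d, ∃ x ∈ C ∩ B, ∃ y ∈ C ∩ B,
    (∀ z ∈ B, x i ≤ z i) ∧ (∀ z ∈ B, z i ≤ y i) ∧ ConnectedIn ω (C ∩ B) x y

/-- The site `i` is `(p,q)`-good at scale 1 (for the box size `N`): (i) there is a unique
`p`-cluster `𝒞` in `B′_N(i)` of diameter larger than `N`; (ii) `𝒞` is crossing for each of
the `3^d` `N`-boxes included in `B′_N(i)`; (iii) points of `𝒞` are joined by `p`-open paths
of length at most `12βN`; (iv) every `q`-open path of length at least `N` in `B′_N(i)`
meets `𝒞`. -/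
def GoodOne (d : ℕ) (ωp ωq : Config d) (β : ℝ) (N : ℕ) (i : Vert d) : Prop :=
  (∃! C : Set (Vert d), IsClusterIn ωp (boxAt' d N i) C ∧ DiamGT C N) ∧
  ∀ C : Set (Vert d), IsClusterIn ωp (boxAt' d N i) C → DiamGT C N →
    ((∀ j : Vert d, boxAt d N j ⊆ boxAt' d N i → Crossing ωp C (boxAt d N j)) ∧
     (∀ x ∈ C, ∀ y ∈ C, ∃ γ : List (Vert d), IsOpenPath ωp γ ∧ PathFromTo γ x y ∧
        ((γ.length : ℝ) - 1) ≤ 12 * β * (N : ℝ)) ∧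
     (∀ γ : List (Vert d), IsOpenPath ωq γ → (∀ v ∈ γ, v ∈ boxAt' d N i) →
        N + 1 ≤ γ.length → ∃ v ∈ γ, v ∈ C))

/-- The connected cluster of `good`-bad sites containing `j` (empty if `j` is good). -/
def badCluster {d : ℕ} (good : Vert d → Prop) (j : Vert d) : Set (Vert d) :=
  {m | ∃ γ : List (Vert d), γ ≠ [] ∧ γ.Chain' adj ∧ PathFromTo γ j m ∧ ∀ v ∈ γ, ¬ good v}

/-- `Nscale l k = N_k = l₁ ⋯ l_k` (here `l j` stands for `l_{j+1}`). -/
def Nscale (l : ℕ → ℕ) (k : ℕ) : ℕ := ∏ j ∈ Finset.range k, l j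

/-- `(p,q)`-good sites at every scale: at scale 1 via `GoodOne`; the site `i` is good at
scale `k+1` when all the clusters of bad scale-`k` sites met from `B̲′_{k+1}(i)` have
cardinality at most `l_{k+1}`. -/
def GoodSite (d : ℕ) (ωp ωq : Config d) (β : ℝ) (l : ℕ → ℕ) : ℕ → Vert d → Prop
  | 0, _ => True
  | 1, i => GoodOne d ωp ωq β (Nscale l 1) i
  | (k + 2), i =>
      ∀ j : Vert d, (j - (l (k + 1) : ℤ) • i) ∈ boxZ d (3 * l (k + 1)) →
        (badCluster (GoodSite d ωp ωq β l (k + 1)) j).Finite ∧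
        (badCluster (GoodSite d ωp ωq β l (k + 1)) j).ncard ≤ l (k + 1)

/-- `n_k(γ)`: the number of `(p,q)`-bad sites at scale `k` whose `N_k`-box meets `γ`. -/
noncomputable def nBad (d : ℕ) (ωp ωq : Config d) (β : ℝ) (l : ℕ → ℕ) (k : ℕ)
    (γ : List (Vert d)) : ℕ :=
  {i : Vert d | ¬ GoodSite d ωp ωq β l k i ∧ ∃ v ∈ γ, v ∈ boxAt d (Nscale l k) i}.ncard

/-- A nearest-neighbour connection between `x` and `y` inside the set `S`. -/
def ConnInSet {d : ℕ} (S : Set (Vert d)) (x y : Vert d) : Prop :=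
  ∃ γ : List (Vert d), γ ≠ [] ∧ γ.Chain' adj ∧ (∀ v ∈ γ, v ∈ S) ∧ PathFromTo γ x y

/-- `x` is connected to infinity by a path inside `S` (equivalently, the connected
component of `x` in `S` is infinite). -/
def ConnToInfinity {d : ℕ} (S : Set (Vert d)) (x : Vert d) : Prop :=
  {y | ConnInSet S x y}.Infinite

/-- The exterior vertex boundary `∂_v C`. -/
def extBoundary {d : ℕ} (C : Set (Vert d)) : Set (Vert d) :=
  {i | i ∉ C ∧ (∃ j ∈ C, adj i j) ∧ ConnToInfinity Cᶜ i}

/-- The interior of `C`: sites outside `C` that are not connected to infinity by a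
ℤ^d-path avoiding `C`. -/
def interiorOf {d : ℕ} (C : Set (Vert d)) : Set (Vert d) :=
  {i | i ∉ C ∧ ¬ ConnToInfinity Cᶜ i}

/-- `S` is a *-connected set of sites. -/
def StarConnected {d : ℕ} (S : Set (Vert d)) : Prop :=
  ∀ x ∈ S, ∀ y ∈ S, ∃ γ : List (Vert d), γ ≠ [] ∧ γ.Chain' adjStar ∧
    (∀ v ∈ γ, v ∈ S) ∧ PathFromTo γ x y

/-- `S` is a shell (at scale-1 box size `N`) for the edge with endpoints `a, b`:
a *-connected set of sites with `∂_v(int S) = S`, the edge lying inside a box of the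
interior of `S`. -/
def IsShell (d : ℕ) (N : ℕ) (S : Set (Vert d)) (a b : Vert d) : Prop :=
  StarConnected S ∧ extBoundary (interiorOf S) = S ∧
  ∃ i ∈ interiorOf S, a ∈ boxAt d N i ∧ b ∈ boxAt d N i

/-- The set of (oriented pairs representing the) edges of the path `γ`. -/
def edgeSetOf {d : ℕ} (γ : List (Vert d)) : Set (Vert d × Vert d) :=
  {z | z ∈ γ.zip γ.tail ∨ z.swap ∈ γ.zip γ.tail}

/-- The edges of `γ` lying outside `B_{4N_M} ∪ (x + B_{4N_M})`, as a finite set of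
pairs of consecutive vertices of `γ`. -/
noncomputable def gammaBar (d : ℕ) (NM : ℕ) (x : Vert d) (γ : List (Vert d)) :
    Finset (Vert d × Vert d) :=
  ((γ.zip γ.tail).toFinset).filter (fun z =>
    z.1 ∉ boxZ d (4 * NM) ∧ z.2 ∉ boxZ d (4 * NM) ∧
    z.1 - x ∉ boxZ d (4 * NM) ∧ z.2 - x ∉ boxZ d (4 * NM))

/-!
A good site `i` carries a single `p`-cluster `𝒞ᵢ` of `B′_N(i)` of diameter larger than `N`, and
any two of its points are joined by a `p`-open path of length at most `12βN`. For `*`-adjacent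
good sites `i, i'` the clusters meet: `𝒞ᵢ` crosses `B_N(i') ⊆ B′_N(i)`, and a `q`-open path of
length `N` in `B′_N(i')` made of `p`-open edges of `𝒞ᵢ` has to hit `𝒞ᵢ'`. Along a self-avoiding
`*`-path `j = i₀, …, iₘ = k` in `ℐ` (so `m + 1 ≤ |ℐ|`) one concatenates short paths from `x` to
`𝒞ᵢ₀ ∩ 𝒞ᵢ₁`, on to `𝒞ᵢ₁ ∩ 𝒞ᵢ₂`, …, and finally to `y`. Every vertex of the result lies within
`12βN` of some `B′_N(i)`, hence within `12βN + 3dN/2` of the centre of `B_N(i)`, which is closer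
than any point of `A`.
-/

lemma exists_isChain_alternating {α : Type*} {R : α → α → Prop} {a b : α}
    (hab : R a b) (hba : R b a) (n : ℕ) :
    ∃ l : List α, l ≠ [] ∧ l.IsChain R ∧ l.length = n + 1 ∧ ∀ v ∈ l, v = a ∨ v = b := by
  refine ⟨(List.range (n + 1)).map fun m => if Even m then a else b, by simp, ?_, by simp, ?_⟩
  · rw [List.isChain_map, List.isChain_range_succ]
    intro m _
    by_cases hm : Even m <;> simp [hm, Nat.even_add_one, hab, hba]
  · simp only [List.mem_map]
    rintro v ⟨m, -, rfl⟩
    split_ifs <;> simp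

section Paths

variable {d : ℕ} {ω : Config d} {γ γ₁ γ₂ : List (Vert d)} {x y z : Vert d}

lemma edgeOpenPair.symm (h : edgeOpenPair ω x y) : edgeOpenPair ω y x := by
  obtain ⟨i, h | h⟩ := h
  exacts [⟨i, Or.inr h⟩, ⟨i, Or.inl h⟩]

lemma edgeOpenPair.mono {ω' : Config d} (hle : ∀ e, ω e = true → ω' e = true)
    (h : edgeOpenPair ω x y) : edgeOpenPair ω' x y := by
  obtain ⟨i, h | h⟩ := h
  exacts [⟨i, Or.inl ⟨h.1, hle _ h.2⟩⟩, ⟨i, Or.inr ⟨h.1, hle _ h.2⟩⟩]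

lemma PathFromTo.reverse (h : PathFromTo γ x y) : PathFromTo γ.reverse y x := by
  rw [PathFromTo, List.head?_reverse, List.getLast?_reverse]
  exact h.symm

lemma IsOpenPath.reverse (h : IsOpenPath ω γ) : IsOpenPath ω γ.reverse :=
  ⟨by simpa using h.1, List.isChain_reverse.2 (h.2.imp fun _ _ e => e.symm)⟩

lemma PathFromTo.append_tail (h₁ : PathFromTo γ₁ x y) (h₂ : PathFromTo γ₂ y z) :
    PathFromTo (γ₁ ++ γ₂.tail) x z := by
  have hγ₁ : γ₁ ≠ [] := by rintro rfl; simp [PathFromTo] at h₁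
  obtain ⟨y', t, rfl⟩ : ∃ y' t, γ₂ = y' :: t := List.exists_cons_of_ne_nil (by
    rintro rfl; simp [PathFromTo] at h₂)
  obtain rfl : y = y' := by simpa using h₂.1.symm
  refine ⟨by rw [List.head?_append_of_ne_nil _ hγ₁]; exact h₁.1, ?_⟩
  have h₂ : t.getLast?.getD y = z := by simpa [List.getLast?_cons] using h₂.2
  rw [List.tail_cons, List.getLast?_append, h₁.2, ← h₂]
  cases t.getLast? <;> rfl

lemma IsOpenPath.append_tail (h₁ : IsOpenPath ω γ₁) (h₂ : IsOpenPath ω γ₂)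
    (h : γ₁.getLast? = γ₂.head?) : IsOpenPath ω (γ₁ ++ γ₂.tail) := by
  refine ⟨by simp [h₁.1], show List.IsChain _ _ from ?_⟩
  obtain ⟨γ₁, y, rfl⟩ := List.eq_nil_or_concat γ₁ |>.resolve_left h₁.1
  obtain ⟨y', t, rfl⟩ := List.exists_cons_of_ne_nil h₂.1
  obtain rfl : y = y' := by simpa using h
  rw [List.concat_eq_append] at h₁
  simpa using List.IsChain.append_overlap (l₃ := t) h₁.2 h₂.2 (by simp)

lemma length_append_tail (h : γ₂ ≠ []) :
    (γ₁ ++ γ₂.tail).length + 1 = γ₁.length + γ₂.length := by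
  obtain ⟨y, t, rfl⟩ := List.exists_cons_of_ne_nil h
  simp; omega

lemma ConnectedIn.symm {S : Set (Vert d)} (h : ConnectedIn ω S x y) : ConnectedIn ω S y x := by
  obtain ⟨γ, ⟨hγ, hS⟩, hft⟩ := h
  exact ⟨γ.reverse, ⟨hγ.reverse, by simpa using hS⟩, hft.reverse⟩

lemma ConnectedIn.trans {S : Set (Vert d)} (h₁ : ConnectedIn ω S x y)
    (h₂ : ConnectedIn ω S y z) : ConnectedIn ω S x z := by
  obtain ⟨γ₁, ⟨hγ₁, hS₁⟩, hft₁⟩ := h₁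
  obtain ⟨γ₂, ⟨hγ₂, hS₂⟩, hft₂⟩ := h₂
  refine ⟨γ₁ ++ γ₂.tail, ⟨hγ₁.append_tail hγ₂ (hft₁.2.trans hft₂.1.symm), ?_⟩,
    hft₁.append_tail hft₂⟩
  simp only [List.mem_append]
  rintro v (hv | hv)
  exacts [hS₁ v hv, hS₂ v (List.mem_of_mem_tail hv)]

end Paths

section Geometry

variable {d : ℕ}

lemma dist1_comm (x y : Vert d) : dist1 x y = dist1 y x := by
  simp only [dist1, ← Int.natAbs_neg (x _ - y _), neg_sub]

lemma dist1_triangle (x y z : Vert d) : dist1 x z ≤ dist1 x y + dist1 y z := by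
  rw [dist1, dist1, dist1, ← Finset.sum_add_distrib]
  gcongr with c
  exact (congrArg Int.natAbs (sub_add_sub_cancel _ _ _).symm).trans_le (Int.natAbs_add_le _ _)

lemma natAbs_sub_le_dist1 (x y : Vert d) (c : Fin d) : (x c - y c).natAbs ≤ dist1 x y :=
  Finset.single_le_sum (f := fun c => (x c - y c).natAbs) (by simp) (Finset.mem_univ c)

lemma natAbs_sub_le_distInfty (x y : Vert d) (c : Fin d) :
    (x c - y c).natAbs ≤ distInfty x y :=
  Finset.le_sup (f := fun c => (x c - y c).natAbs) (Finset.mem_univ c)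

lemma distInfty_comm (x y : Vert d) : distInfty x y = distInfty y x := by
  simp only [distInfty, ← Int.natAbs_neg (x _ - y _), neg_sub]

lemma distInfty_self (x : Vert d) : distInfty x x = 0 := by
  simp [distInfty]

lemma dist1_add_unitVec (x : Vert d) (i : Fin d) : dist1 x (x + unitVec d i) = 1 := by
  simp [dist1, unitVec, apply_ite]

lemma edgeOpenPair.dist1_eq_one {ω : Config d} {x y : Vert d} (h : edgeOpenPair ω x y) :
    dist1 x y = 1 := by
  obtain ⟨i, ⟨rfl, -⟩ | ⟨rfl, -⟩⟩ := h
  · exact dist1_add_unitVec x i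
  · rw [dist1_comm]; exact dist1_add_unitVec y i

lemma dist1_add_one_le_length_of_isChain {ω : Config d} {γ : List (Vert d)} {a v : Vert d}
    (hγ : γ.IsChain (edgeOpenPair ω)) (ha : γ.head? = some a) (hv : v ∈ γ) :
    dist1 a v + 1 ≤ γ.length := by
  induction γ generalizing a with
  | nil => simp at hv
  | cons b t ih =>
    obtain rfl : b = a := by simpa using ha
    rcases List.mem_cons.1 hv with rfl | hv
    · simp [dist1]
    obtain ⟨u, t, rfl⟩ := List.exists_cons_of_ne_nil (List.ne_nil_of_mem hv)
    have hbu := (List.isChain_cons_cons.1 hγ).1.dist1_eq_one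
    have := ih (List.isChain_cons_cons.1 hγ).2 rfl hv
    have := dist1_triangle b u v
    simp only [List.length_cons] at *
    omega

lemma IsOpenPath.dist1_le {ω : Config d} {γ : List (Vert d)} {a v : Vert d} {r : ℝ}
    (hγ : IsOpenPath ω γ) (ha : γ.head? = some a) (hlen : (γ.length : ℝ) - 1 ≤ r)
    (hv : v ∈ γ) : (dist1 a v : ℝ) ≤ r := by
  have : ((dist1 a v + 1 : ℕ) : ℝ) ≤ γ.length :=
    Nat.cast_le.2 (dist1_add_one_le_length_of_isChain hγ.2 ha hv)
  push_cast at this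
  linarith

lemma mem_boxZ_iff {N : ℕ} {x : Vert d} :
    x ∈ boxZ d N ↔ ∀ c, -(N : ℤ) ≤ 2 * x c ∧ 2 * x c < N := by
  refine forall_congr' fun c => and_congr ?_ ?_
  · rw [← @Int.cast_le ℝ]; push_cast; constructor <;> intro h <;> linarith
  · rw [← @Int.cast_lt ℝ]; push_cast; constructor <;> intro h <;> linarith

variable {N : ℕ}

lemma mem_boxAt_iff {i v : Vert d} :
    v ∈ boxAt d N i ↔ ∀ c, -(N : ℤ) ≤ 2 * (v c - N * i c) ∧ 2 * (v c - N * i c) < N := by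
  simp [boxAt, mem_boxZ_iff]

lemma mem_boxAt'_iff {i v : Vert d} :
    v ∈ boxAt' d N i ↔
      ∀ c, -(3 * N : ℤ) ≤ 2 * (v c - N * i c) ∧ 2 * (v c - N * i c) < 3 * N := by
  simp [boxAt', mem_boxZ_iff]

lemma boxAt_subset_boxAt' {i i' : Vert d} (h : distInfty i i' ≤ 1) :
    boxAt d N i' ⊆ boxAt' d N i := by
  intro v hv
  rw [mem_boxAt_iff] at hv
  rw [mem_boxAt'_iff]
  intro c
  have hc := (natAbs_sub_le_distInfty i i' c).trans h
  have : (N : ℤ) * i c - N * i' c = N * (i c - i' c) := by ring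
  have : -(N : ℤ) ≤ N * (i c - i' c) ∧ (N : ℤ) * (i c - i' c) ≤ N := by
    rcases (by omega : i c - i' c = -1 ∨ i c - i' c = 0 ∨ i c - i' c = 1) with h | h | h <;>
      simp [h]
  have := hv c
  omega

lemma mem_boxAt'_of_dist1_le_one (hN : 1 ≤ N) {i x u : Vert d} (hx : x ∈ boxAt d N i)
    (hu : dist1 x u ≤ 1) : u ∈ boxAt' d N i := by
  rw [mem_boxAt_iff] at hx
  rw [mem_boxAt'_iff]
  intro c
  have := (natAbs_sub_le_dist1 x u c).trans hu
  have := hx c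
  omega

lemma smul_mem_boxAt (hN : 1 ≤ N) (i : Vert d) : (N : ℤ) • i ∈ boxAt d N i := by
  rw [mem_boxAt_iff]
  intro c
  simp only [Pi.smul_apply, smul_eq_mul, sub_self]
  omega

lemma two_mul_dist1_le_of_mem_boxAt' {i a : Vert d} (ha : a ∈ boxAt' d N i) :
    2 * dist1 a ((N : ℤ) • i) ≤ 3 * N * d := by
  rw [mem_boxAt'_iff] at ha
  calc 2 * dist1 a ((N : ℤ) • i) = ∑ c, 2 * (a c - N * i c).natAbs := by
        simp [dist1, Finset.mul_sum]
    _ ≤ ∑ _c : Fin d, 3 * N := Finset.sum_le_sum fun c _ => by have := ha c; omega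
    _ = 3 * N * d := by simp [mul_comm]

end Geometry

section Clusters

variable {d : ℕ} {ω : Config d} {S C : Set (Vert d)} {x : Vert d}

lemma clusterIn_subset (x₀ : Vert d) : clusterIn ω S x₀ ⊆ S := fun _ ⟨_, ⟨_, hS⟩, hft⟩ =>
  hS _ (List.mem_of_getLast? hft.2)

lemma ConnectedIn.of_edge {y : Vert d} (hx : x ∈ S) (hy : y ∈ S) (h : edgeOpenPair ω x y) :
    ConnectedIn ω S x y :=
  ⟨[x, y], ⟨⟨by simp, List.isChain_pair.2 h⟩, by simp [hx, hy]⟩, rfl, rfl⟩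

lemma IsClusterIn.exists_edge (hC : IsClusterIn ω S C) {N : ℕ} (hdiam : DiamGT C N)
    (hx : x ∈ C) : ∃ u ∈ C, edgeOpenPair ω x u := by
  obtain ⟨x₀, -, rfl⟩ := hC
  obtain ⟨w, hw, hwx⟩ : ∃ w ∈ clusterIn ω S x₀, w ≠ x := by
    obtain ⟨u₁, hu₁, u₂, hu₂, hlt⟩ := hdiam
    by_cases h : u₁ = x
    · refine ⟨u₂, hu₂, ?_⟩
      rintro rfl
      simp [h, distInfty_self] at hlt
    · exact ⟨u₁, hu₁, h⟩
  obtain ⟨γ, ⟨⟨-, hγ⟩, hS⟩, hhead, hlast⟩ := (ConnectedIn.symm hx).trans hw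
  obtain ⟨u, t, rfl⟩ : ∃ u t, γ = x :: u :: t := by
    match γ, hhead, hlast with
    | [_], rfl, hlast => exact absurd (by simpa using hlast) hwx.symm
    | _ :: u :: t, rfl, _ => exact ⟨u, t, rfl⟩
  have hxu := (List.isChain_cons_cons.1 hγ).1
  exact ⟨u, hx.trans (.of_edge (hS x (by simp)) (hS u (by simp)) hxu), hxu⟩

end Clusters

/-- For a good site `i` this is the `p`-crossing cluster `𝒞ᵢ` of `B_N(i)`. -/
def crossingCluster {d : ℕ} (ωp : Config d) (N : ℕ) (i : Vert d) : Set (Vert d) :=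
  {x | ∃ C, IsClusterIn ωp (boxAt' d N i) C ∧ DiamGT C N ∧ x ∈ C}

def starGraph (d : ℕ) : SimpleGraph (Vert d) where
  Adj := adjStar
  symm := ⟨fun x y (h : distInfty x y = 1) => show distInfty y x = 1 by rwa [distInfty_comm]⟩
  loopless := ⟨fun x h => by simp [adjStar, distInfty_self] at h⟩

section GoodSites

variable {d N : ℕ} {ωp ωq : Config d} {β : ℝ} {i i' x y : Vert d}

lemma crossingCluster_subset_boxAt' : crossingCluster ωp N i ⊆ boxAt' d N i := by
  rintro x ⟨C, ⟨x₀, -, rfl⟩, -, hx⟩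
  exact clusterIn_subset x₀ hx

lemma GoodOne.exists_short_path (hi : GoodOne d ωp ωq β N i) (hx : x ∈ crossingCluster ωp N i)
    (hy : y ∈ crossingCluster ωp N i) :
    ∃ γ, IsOpenPath ωp γ ∧ PathFromTo γ x y ∧ (γ.length : ℝ) - 1 ≤ 12 * β * N := by
  obtain ⟨C, hC, hdiam, hxC⟩ := hx
  obtain ⟨C', hC', hdiam', hyC'⟩ := hy
  obtain rfl := hi.1.unique ⟨hC, hdiam⟩ ⟨hC', hdiam'⟩
  exact (hi.2 C hC hdiam).2.1 x hxC y hyC'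

/-- Property (iv) of `B′_N(i')` applies to paths that backtrack, so bouncing `N` times along one
`p`-open edge of `𝒞ᵢ` inside `B_N(i')` already produces a point of `𝒞ᵢ ∩ 𝒞ᵢ'`. -/
lemma GoodOne.exists_mem_crossingCluster_inter (hd : 0 < d) (hN : 1 ≤ N)
    (hcoup : ∀ e, ωp e = true → ωq e = true) (hi : GoodOne d ωp ωq β N i)
    (hi' : GoodOne d ωp ωq β N i') (hadj : adjStar i i') :
    ∃ z, z ∈ crossingCluster ωp N i ∧ z ∈ crossingCluster ωp N i' := by
  obtain ⟨C, ⟨hC, hdiam⟩, -⟩ := hi.1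
  obtain ⟨C', ⟨hC', hdiam'⟩, -⟩ := hi'.1
  obtain ⟨x, ⟨hxC, hxB⟩, -⟩ :=
    (hi.2 C hC hdiam).1 i' (boxAt_subset_boxAt' hadj.le) ⟨0, hd⟩
  obtain ⟨u, huC, hxu⟩ := hC.exists_edge hdiam hxC
  obtain ⟨γ, hne, hγ, hlen, hmem⟩ :=
    exists_isChain_alternating (hxu.mono hcoup) (hxu.symm.mono hcoup) N
  have hγB : ∀ v ∈ γ, v ∈ boxAt' d N i' := by
    intro v hv
    rcases hmem v hv with rfl | rfl
    · exact boxAt_subset_boxAt' (by rw [distInfty_self]; omega) hxB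
    · exact mem_boxAt'_of_dist1_le_one hN hxB hxu.dist1_eq_one.le
  obtain ⟨v, hv, hvC'⟩ := (hi'.2 C' hC' hdiam').2.2 γ ⟨hne, hγ⟩ hγB hlen.ge
  refine ⟨v, ⟨C, hC, hdiam, ?_⟩, C', hC', hdiam', hvC'⟩
  rcases hmem v hv with rfl | rfl
  exacts [hxC, huC]

variable {I : Finset (Vert d)}

lemma exists_path_along_walk (hd : 0 < d) (hN : 1 ≤ N)
    (hcoup : ∀ e, ωp e = true → ωq e = true) (hgood : ∀ i ∈ I, GoodOne d ωp ωq β N i)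
    {i i' : (I : Set (Vert d))} (w : ((starGraph d).induce (I : Set (Vert d))).Walk i i')
    (hx : x ∈ crossingCluster ωp N i) (hy : y ∈ crossingCluster ωp N i') :
    ∃ γ, IsOpenPath ωp γ ∧ PathFromTo γ x y ∧
      (γ.length : ℝ) - 1 ≤ 12 * β * N * (w.length + 1) ∧
      ∀ v ∈ γ, ∃ i ∈ I, ∃ a ∈ crossingCluster ωp N i, (dist1 a v : ℝ) ≤ 12 * β * N := by
  induction w generalizing x with
  | @nil i =>
    obtain ⟨γ, hγ, hft, hlen⟩ := (hgood i i.2).exists_short_path hx hy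
    exact ⟨γ, hγ, hft, by simpa using hlen,
      fun v hv => ⟨i, i.2, x, hx, hγ.dist1_le hft.1 hlen hv⟩⟩
  | @cons i i'' i' hadj w ih =>
    obtain ⟨z, hzi, hzi''⟩ := (hgood i i.2).exists_mem_crossingCluster_inter hd hN hcoup
      (hgood i'' i''.2) (SimpleGraph.induce_adj.1 hadj)
    obtain ⟨γ₁, hγ₁, hft₁, hlen₁⟩ := (hgood i i.2).exists_short_path hx hzi
    obtain ⟨γ₂, hγ₂, hft₂, hlen₂, hnear₂⟩ := ih hzi'' hy
    refine ⟨γ₁ ++ γ₂.tail, hγ₁.append_tail hγ₂ (hft₁.2.trans hft₂.1.symm),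
      hft₁.append_tail hft₂, ?_, ?_⟩
    · have := congrArg (Nat.cast (R := ℝ)) (length_append_tail (γ₁ := γ₁) hγ₂.1)
      push_cast at this
      rw [SimpleGraph.Walk.length_cons]
      push_cast
      linarith
    · simp only [List.mem_append]
      rintro v (hv | hv)
      · exact ⟨i, i.2, x, hx, hγ₁.dist1_le hft₁.1 hlen₁ hv⟩
      · exact hnear₂ v (List.mem_of_mem_tail hv)

end GoodSites

lemma StarConnected.preconnected_induce {d : ℕ} {S : Set (Vert d)} (hS : StarConnected S) :
    ((starGraph d).induce S).Preconnected := by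
  rintro ⟨x, hx⟩ ⟨y, hy⟩
  obtain ⟨γ, -, hγ, hmem, hhead, hlast⟩ := hS x hx y hy
  induction γ generalizing x with
  | nil => simp at hhead
  | cons a t ih =>
    obtain rfl : a = x := by simpa using hhead
    rcases t with _ | ⟨b, t⟩
    · obtain rfl : a = y := by simpa using hlast
      rfl
    · have hab := List.isChain_cons_cons.1 hγ
      have hb : b ∈ S := hmem b (by simp)
      exact (SimpleGraph.Adj.reachable (G := (starGraph d).induce S) (u := ⟨a, hx⟩)
        (v := ⟨b, hb⟩) hab.1).trans (ih b hb hab.2 (fun v hv => hmem v (.tail a hv)) rfl hlast)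

lemma notMem_of_dist1_le_of_mem_boxAt' {d N : ℕ} {β : ℝ} (hβ : 0 ≤ β) {A : Set (Vert d)} {i a v : Vert d}
    (hA : ∀ b ∈ A, (14 * β + 2 * (d : ℝ)) * (N : ℝ) < (dist1 b ((N : ℤ) • i) : ℝ))
    (ha : a ∈ boxAt' d N i) (hav : (dist1 a v : ℝ) ≤ 12 * β * N) : v ∉ A := by
  intro hv
  have hfar := hA v hv
  have htri : (dist1 v ((N : ℤ) • i) : ℝ) ≤ dist1 a v + dist1 a ((N : ℤ) • i) := by
    rw [dist1_comm a v]; exact_mod_cast dist1_triangle _ _ _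
  have hbox : 2 * (dist1 a ((N : ℤ) • i) : ℝ) ≤ 3 * N * d := by
    exact_mod_cast two_mul_dist1_le_of_mem_boxAt' ha
  have : 0 ≤ β * N := by positivity
  nlinarith

theorem statement12_general (d : ℕ) (hd : 2 ≤ d) (β : ℝ)
    (hβ : 1 ≤ β) (N : ℕ) (hN : 1 ≤ N)
    (ωp ωq : Config d) (hcoup : ∀ e, ωp e = true → ωq e = true)
    (A : Set (Vert d)) (I : Finset (Vert d))
    (hstar : StarConnected (I : Set (Vert d)))
    (hgood : ∀ i ∈ I, GoodOne d ωp ωq β N i)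
    (hdis : ∀ a ∈ A, ∀ i ∈ I, ∀ v ∈ boxAt d N i,
      (14 * β + 2 * (d : ℝ)) * (N : ℝ) < (dist1 a v : ℝ))
    (j k : Vert d) (hj : j ∈ I) (hk : k ∈ I) (x y : Vert d)
    (hxC : ∃ C : Set (Vert d), IsClusterIn ωp (boxAt' d N j) C ∧ DiamGT C N ∧ x ∈ C)
    (hyC : ∃ C : Set (Vert d), IsClusterIn ωp (boxAt' d N k) C ∧ DiamGT C N ∧ y ∈ C) :
    ∃ γ : List (Vert d), IsOpenPath ωp γ ∧ PathFromTo γ x y ∧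
      ((γ.length : ℝ) - 1) ≤ 12 * β * (N : ℝ) * (I.card : ℝ) ∧
      ∀ v ∈ γ, v ∉ A := by
  obtain ⟨w⟩ := hstar.preconnected_induce ⟨j, hj⟩ ⟨k, hk⟩
  have hcard : w.toPath.1.length + 1 ≤ I.card := by
    simpa using w.toPath.2.length_lt
  obtain ⟨γ, hγ, hft, hlen, hnear⟩ :=
    exists_path_along_walk (by omega) hN hcoup hgood w.toPath.1 hxC hyC
  refine ⟨γ, hγ, hft, hlen.trans ?_, fun v hv => ?_⟩
  · gcongr
    exact_mod_cast hcard
  · obtain ⟨i, hi, a, ha, hav⟩ := hnear v hv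
    exact notMem_of_dist1_le_of_mem_boxAt' (by linarith)
      (fun b hb => hdis b hb i hi _ (smul_mem_boxAt hN i)) (crossingCluster_subset_boxAt' ha) hav

/-- Inside a *-connected set `ℐ` of `(p,q)`-good boxes at scale 1, far from a set `A`,
any two points of the crossing clusters of boxes of `ℐ` are joined by a `p`-open path of
length at most `12 β N₁ |ℐ|` avoiding `A`. -/
theorem statement12 (d : ℕ) (hd : 2 ≤ d) (p q β : ℝ) (hp : pc d < p) (hpq : p < q)
    (hq : q ≤ 1) (hβ : 1 ≤ β) (N : ℕ) (hN : 1 ≤ N)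
    (ωp ωq : Config d) (hcoup : ∀ e, ωp e = true → ωq e = true)
    (A : Set (Vert d)) (I : Finset (Vert d))
    (hstar : StarConnected (I : Set (Vert d)))
    (hgood : ∀ i ∈ I, GoodOne d ωp ωq β N i)
    (hdis : ∀ a ∈ A, ∀ i ∈ I, ∀ v ∈ boxAt d N i,
      (14 * β + 2 * (d : ℝ)) * (N : ℝ) < (dist1 a v : ℝ))
    (j k : Vert d) (hj : j ∈ I) (hk : k ∈ I) (x y : Vert d)
    (hxB : x ∈ boxAt' d N j) (hyB : y ∈ boxAt' d N k)
    (hxC : ∃ C : Set (Vert d), IsClusterIn ωp (boxAt' d N j) C ∧ DiamGT C N ∧ x ∈ C)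
    (hyC : ∃ C : Set (Vert d), IsClusterIn ωp (boxAt' d N k) C ∧ DiamGT C N ∧ y ∈ C) :
    ∃ γ : List (Vert d), IsOpenPath ωp γ ∧ PathFromTo γ x y ∧
      ((γ.length : ℝ) - 1) ≤ 12 * β * (N : ℝ) * (I.card : ℝ) ∧
      ∀ v ∈ γ, v ∉ A :=
  statement12_general d hd β hβ N hN ωp ωq hcoup A I hstar hgood hdis j k hj hk x y hxC hyC

end FPP
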